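/- arXiv:2305.06268 — 3 statements merged into one kernel-verified Lean document; each statement's English description precedes it below -/
import Mathlib

section
/- For probability mass functions P and Q on a finite alphabet Z with P absolutely continuous with respect to Q, and for the mixture W_α = α·P + (1-α)·Q with α ∈ (0,1), the KL divergence D(W_α ‖ Q) is at most (α²/2)·χ₂(P‖Q)·(1 + √α) for all sufficiently small α, where χ₂(P‖Q) = Σ_z (P(z)-Q(z))²/Q(z). -/
open Filter Real

noncomputable def KL {Z : Type*} [Fintype Z] (P Q : Z → ℝ) : ℝ :=
  ∑ z, P z * Real.log (P z / Q z)

noncomputable def chi2 {Z : Type*} [Fintype Z] (P Q : Z → ℝ) : ℝ :=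
  ∑ z, (P z - Q z)^2 / Q z

def IsPMF {Z : Type*} [Fintype Z] (P : Z → ℝ) : Prop :=
  (∀ z, 0 ≤ P z) ∧ ∑ z, P z = 1

/-- absolute continuity `P ≪ Q` for pmfs on a finite alphabet -/
def AC {Z : Type*} [Fintype Z] (P Q : Z → ℝ) : Prop := ∀ z, Q z = 0 → P z = 0

/-!
Since `P ≥ 0`, the likelihood ratio `W_α / Q` is bounded below by `1 - α`. On `[c, ∞)` the
function `x log x` has second derivative `1 / x ≤ 1 / c`, so it lies below its second-order Taylor
polynomial at `1` with curvature `1 / c`. Summed against `Q` with `c = 1 - α`, the linear term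
vanishes and `D(W_α ‖ Q) ≤ α² χ₂(P ‖ Q) / (2 (1 - α))`; finally `1 / (1 - α) ≤ 1 + √α`
once `α ≤ 1/4`.
-/

open Set

lemma mul_log_le_sub_one_add_sq_div {c x : ℝ} (hc : 0 < c) (hc1 : c ≤ 1) (hx : c ≤ x) :
    x * log x ≤ x - 1 + (x - 1) ^ 2 / (2 * c) := by
  set f : ℝ → ℝ := fun y => y - 1 + (y - 1) ^ 2 / (2 * c) - y * log y
  have hf : ∀ y, 0 < y → HasDerivAt f ((y - 1) / c - log y) y := fun y hy =>
    ((((hasDerivAt_id' y).sub_const 1).add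
      ((((hasDerivAt_id' y).sub_const 1).pow 2).div_const (2 * c))).sub
      ((hasDerivAt_id' y).mul (hasDerivAt_log hy.ne'))).congr_deriv (by field_simp; ring)
  have hdiff : ∀ s ⊆ Ioi 0, DifferentiableOn ℝ f s := fun s hs y hy =>
    (hf y (hs hy)).differentiableAt.differentiableWithinAt
  have hmin : IsMinOn f (Ici c) 1 := by
    refine isMinOn_Ici_of_deriv (hf c hc).continuousAt (hf 1 one_pos).continuousAt
      (hdiff _ (Ioo_subset_Ioi_self.trans (Ioi_subset_Ioi hc.le)))
      (hdiff _ (Ioi_subset_Ioi zero_le_one)) ?_ ?_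
    · rintro y ⟨hcy, hy1⟩
      have hy : 0 < y := hc.trans hcy
      rw [(hf y hy).deriv, sub_nonpos]
      calc (y - 1) / c ≤ (y - 1) / y := by
            rw [div_le_div_iff₀ hc hy]
            nlinarith
        _ = 1 - y⁻¹ := by rw [sub_div, div_self hy.ne', one_div]
        _ ≤ log y := one_sub_inv_le_log_of_pos hy
    · intro y hy
      rw [(hf y (one_pos.trans hy)).deriv, sub_nonneg]
      calc log y ≤ y - 1 := log_le_sub_one_of_pos (one_pos.trans hy)
        _ ≤ (y - 1) / c := le_div_self (by linarith [mem_Ioi.1 hy]) hc hc1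
  have := hmin (mem_Ici.2 hx)
  norm_num [f] at this
  linarith

lemma mul_log_div_le {c q w : ℝ} (hc : 0 < c) (hc1 : c ≤ 1) (hq : 0 ≤ q) (hw : c * q ≤ w) :
    w * log (w / q) ≤ w - q + (w - q) ^ 2 / q / (2 * c) := by
  rcases hq.eq_or_lt with rfl | hq_pos
  · -- `w / 0 = 0`, so the left side vanishes and the bound reduces to `0 ≤ w`.
    simpa using hw
  have hx : c ≤ w / q := by rwa [le_div_iff₀ hq_pos]
  calc w * log (w / q) = q * (w / q * log (w / q)) := by
        rw [← mul_assoc, mul_div_cancel₀ _ hq_pos.ne']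
    _ ≤ q * (w / q - 1 + (w / q - 1) ^ 2 / (2 * c)) :=
        mul_le_mul_of_nonneg_left (mul_log_le_sub_one_add_sq_div hc hc1 hx) hq
    _ = w - q + (w - q) ^ 2 / q / (2 * c) := by field_simp

lemma chi2_nonneg {Z : Type*} [Fintype Z] (P : Z → ℝ) {Q : Z → ℝ} (hQ : ∀ z, 0 ≤ Q z) :
    0 ≤ chi2 P Q :=
  Finset.sum_nonneg fun z _ => div_nonneg (sq_nonneg _) (hQ z)

lemma KL_mixture_le {Z : Type*} [Fintype Z] {P Q : Z → ℝ} (hP : IsPMF P) (hQ : IsPMF Q)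
    {α : ℝ} (hα0 : 0 ≤ α) (hα1 : α < 1) :
    KL (fun z => α * P z + (1 - α) * Q z) Q ≤ α ^ 2 / (2 * (1 - α)) * chi2 P Q := by
  have hterm : ∀ z, (α * P z + (1 - α) * Q z) * log ((α * P z + (1 - α) * Q z) / Q z) ≤
      α * (P z - Q z) + α ^ 2 / (2 * (1 - α)) * ((P z - Q z) ^ 2 / Q z) := fun z => by
    have := mul_log_div_le (sub_pos.2 hα1) (by linarith) (hQ.1 z)
      (le_add_of_nonneg_left (mul_nonneg hα0 (hP.1 z)))
    convert this using 1
    field_simp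
    ring
  calc KL (fun z => α * P z + (1 - α) * Q z) Q
      ≤ ∑ z, (α * (P z - Q z) + α ^ 2 / (2 * (1 - α)) * ((P z - Q z) ^ 2 / Q z)) :=
        Finset.sum_le_sum fun z _ => hterm z
    _ = α ^ 2 / (2 * (1 - α)) * chi2 P Q := by
        rw [Finset.sum_add_distrib, ← Finset.mul_sum, ← Finset.mul_sum, Finset.sum_sub_distrib,
          hP.2, hQ.2, sub_self, mul_zero, zero_add, chi2]

lemma one_div_one_sub_le_one_add_sqrt {α : ℝ} (hα0 : 0 ≤ α) (hα : α ≤ 1 / 4) :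
    1 / (1 - α) ≤ 1 + √α := by
  have hs : √α ≤ 1 / 2 := by
    rw [sqrt_le_left (by norm_num)]
    linarith
  have hsq := sq_sqrt hα0
  rw [div_le_iff₀ (by linarith)]
  nlinarith [sqrt_nonneg α]

theorem stmt0_general {Z : Type*} [Fintype Z] (P Q : Z → ℝ)
    (hP : IsPMF P) (hQ : IsPMF Q) :
    ∃ α₀ > (0:ℝ), ∀ α : ℝ, 0 < α → α < 1 → α ≤ α₀ →
      KL (fun z => α * P z + (1 - α) * Q z) Q ≤
        α ^ 2 / 2 * chi2 P Q * (1 + Real.sqrt α) := by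
  refine ⟨1 / 4, by norm_num, fun α hα0 hα1 hα => ?_⟩
  have hfactor : α ^ 2 / (2 * (1 - α)) ≤ α ^ 2 / 2 * (1 + √α) := by
    rw [← div_div, div_eq_mul_one_div (α ^ 2 / 2)]
    gcongr
    exact one_div_one_sub_le_one_add_sqrt hα0.le hα
  calc KL (fun z => α * P z + (1 - α) * Q z) Q ≤ α ^ 2 / (2 * (1 - α)) * chi2 P Q :=
        KL_mixture_le hP hQ hα0.le hα1
    _ ≤ α ^ 2 / 2 * chi2 P Q * (1 + √α) := by
        rw [mul_right_comm]
        exact mul_le_mul_of_nonneg_right hfactor (chi2_nonneg P hQ.1)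

/-- for sufficiently small `α ∈ (0,1)`,
`D(αP+(1-α)Q ‖ Q) ≤ (α²/2)·χ₂(P‖Q)·(1+√α)`. -/
theorem stmt0 {Z : Type*} [Fintype Z] (P Q : Z → ℝ)
    (hP : IsPMF P) (hQ : IsPMF Q) (hAC : AC P Q) :
    ∃ α₀ > (0:ℝ), ∀ α : ℝ, 0 < α → α < 1 → α ≤ α₀ →
      KL (fun z => α * P z + (1 - α) * Q z) Q ≤
        α ^ 2 / 2 * chi2 P Q * (1 + Real.sqrt α) :=
  stmt0_general P Q hP hQ
end

section
/- For probability mass functions P and Q on a finite alphabet Z with P ≪ Q, and W_α = α·P + (1-α)·Q, the KL divergence D(W_α ‖ Q) is at least (α²/2)·χ₂(P‖Q)·(1 - √α) for all sufficiently small α > 0. -/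
/-!
Put `x_z = α (P z / Q z - 1)`, so that `W_α = Q (1 + x)`. Then `D(W_α ‖ Q) = Σ Q φ(x)` with
`φ(x) = (1 + x) log (1 + x) - x`, while `(α² / 2) χ₂(P ‖ Q) = Σ Q x² / 2`. The elementary bound
`φ(x) ≥ (1 - c) x² / 2` for `-1 ≤ x ≤ c` applies with `c = √α`, because `x ≤ α · Σ P / Q ≤ √α`
once `α ≤ (1 + Σ P / Q)⁻²`.
-/

open Filter Real

section EntropyGap

variable (c : ℝ)

lemma hasDerivAt_one_add_mul_log_sub_quadratic {y : ℝ} (hy : -1 < y) :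
    HasDerivAt (fun t => (1 + t) * log (1 + t) - t - (1 - c) * t ^ 2 / 2)
      (log (1 + y) - (1 - c) * y) y := by
  have hy' : (1 + y) ≠ 0 := by linarith
  have h1 : HasDerivAt (fun t : ℝ => 1 + t) 1 y := (hasDerivAt_id y).const_add 1
  refine (((h1.mul (h1.log hy')).sub (hasDerivAt_id y)).sub
    (((hasDerivAt_pow 2 y).const_mul (1 - c)).div_const 2)).congr_deriv ?_
  field_simp
  ring

lemma continuous_one_add_mul_log_sub_quadratic :
    Continuous (fun t : ℝ => (1 + t) * log (1 + t) - t - (1 - c) * t ^ 2 / 2) := by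
  have := continuous_mul_log.comp (continuous_const.add continuous_id : Continuous fun t : ℝ => 1 + t)
  fun_prop

/-- On `[-1, 0]` the derivative `log (1 + t) - (1 - c) t ≤ c t` is nonpositive; on `[0, c]` it is at
least `t / (1 + t) - (1 - c) t = t (c - t / (1 + t)) ≥ 0`. -/
lemma one_sub_mul_sq_div_two_le_one_add_mul_log_sub {x : ℝ} (hc : 0 ≤ c) (hx₁ : -1 ≤ x)
    (hx₂ : x ≤ c) : (1 - c) * x ^ 2 / 2 ≤ (1 + x) * log (1 + x) - x := by
  set g : ℝ → ℝ := fun t => (1 + t) * log (1 + t) - t - (1 - c) * t ^ 2 / 2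
  have hg0 : g 0 = 0 := by simp [g]
  have hderiv : ∀ y, -1 < y → deriv g y = log (1 + y) - (1 - c) * y := fun y hy =>
    (hasDerivAt_one_add_mul_log_sub_quadratic c hy).deriv
  have hdiff : ∀ a b, -1 ≤ a → DifferentiableOn ℝ g (interior (Set.Icc a b)) := by
    intro a b ha y hy
    rw [interior_Icc] at hy
    exact (hasDerivAt_one_add_mul_log_sub_quadratic c (by linarith [hy.1])).differentiableAt
      |>.differentiableWithinAt
  suffices 0 ≤ g x by simp only [g] at this; linarith
  rcases le_total x 0 with hx | hx
  · refine hg0 ▸ antitoneOn_of_deriv_nonpos (convex_Icc (-1) 0)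
      (continuous_one_add_mul_log_sub_quadratic c).continuousOn (hdiff _ _ le_rfl) ?_
      ⟨hx₁, hx⟩ ⟨by norm_num, le_rfl⟩ hx
    intro y hy
    rw [interior_Icc] at hy
    rw [hderiv y hy.1]
    nlinarith [log_le_sub_one_of_pos (show 0 < 1 + y by linarith [hy.1]), hy.2]
  · refine hg0 ▸ monotoneOn_of_deriv_nonneg (convex_Icc 0 c)
      (continuous_one_add_mul_log_sub_quadratic c).continuousOn (hdiff _ _ (by norm_num)) ?_
      ⟨le_rfl, hc⟩ ⟨hx, hx₂⟩ hx
    intro y hy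
    rw [interior_Icc] at hy
    obtain ⟨hy0, hyc⟩ := hy
    have hpos : 0 < 1 + y := by linarith
    rw [hderiv y (by linarith)]
    have hinv : (1 - c) * y ≤ 1 - (1 + y)⁻¹ := by
      rw [inv_eq_one_div, sub_div' hpos.ne', le_div_iff₀ hpos]
      nlinarith [mul_le_mul_of_nonneg_left hyc.le hy0.le, mul_nonneg (mul_nonneg hc hy0.le) hy0.le]
    linarith [one_sub_inv_le_log_of_pos hpos]

end EntropyGap

section Mixture

variable {Z : Type*} [Fintype Z] {P Q : Z → ℝ}

lemma chi2_eq_sum_mul_sq : chi2 P Q = ∑ z, Q z * (P z / Q z - 1) ^ 2 := by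
  refine Finset.sum_congr rfl fun z _ => ?_
  rcases eq_or_ne (Q z) 0 with hq | hq
  · simp [hq]
  · field_simp

/-- With `x = α (P / Q - 1)` one has `W_α = Q (1 + x)`, and the terms `Q x` sum to zero. -/
lemma KL_mixture_eq_sum (hsum : ∑ z, P z = ∑ z, Q z) (hAC : AC P Q) (α : ℝ) :
    KL (fun z => α * P z + (1 - α) * Q z) Q =
      ∑ z, Q z * ((1 + α * (P z / Q z - 1)) * log (1 + α * (P z / Q z - 1)) -
        α * (P z / Q z - 1)) := by
  have hlin : ∀ z, Q z * (α * (P z / Q z - 1)) = α * (P z - Q z) := fun z => by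
    rcases eq_or_ne (Q z) 0 with hq | hq
    · simp [hq, hAC z hq]
    · field_simp
  have hcentered : ∑ z, Q z * (α * (P z / Q z - 1)) = 0 := by
    simp only [hlin, ← Finset.mul_sum, Finset.sum_sub_distrib, hsum, sub_self, mul_zero]
  rw [KL, ← sub_zero (∑ z, _ * log _), ← hcentered, ← Finset.sum_sub_distrib]
  refine Finset.sum_congr rfl fun z _ => ?_
  rw [mul_sub (Q z), sub_left_inj]
  rcases eq_or_ne (Q z) 0 with hq | hq
  · simp [hq, hAC z hq]
  · have hW : α * P z + (1 - α) * Q z = Q z * (1 + α * (P z / Q z - 1)) := by field_simp; ring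
    rw [hW, mul_div_cancel_left₀ _ hq, mul_assoc]

end Mixture

/-- for sufficiently small `α > 0`,
`D(αP+(1-α)Q ‖ Q) ≥ (α²/2)·χ₂(P‖Q)·(1-√α)`. -/
theorem stmt1 {Z : Type*} [Fintype Z] (P Q : Z → ℝ)
    (hP : IsPMF P) (hQ : IsPMF Q) (hAC : AC P Q) :
    ∃ α₀ > (0:ℝ), ∀ α : ℝ, 0 < α → α ≤ α₀ →
      α ^ 2 / 2 * chi2 P Q * (1 - Real.sqrt α) ≤
        KL (fun z => α * P z + (1 - α) * Q z) Q := by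
  obtain ⟨hP0, hP1⟩ := hP
  obtain ⟨hQ0, hQ1⟩ := hQ
  set R := ∑ z, P z / Q z
  have hR : 0 ≤ R := Finset.sum_nonneg fun z _ => div_nonneg (hP0 z) (hQ0 z)
  refine ⟨1 / (R + 1) ^ 2, by positivity, fun α hα hαle => ?_⟩
  have hαR : α * (R + 1) ^ 2 ≤ 1 := (le_div_iff₀ (by positivity)).mp hαle
  have hα1 : α ≤ 1 := by nlinarith [one_le_pow₀ (n := 2) (by linarith : 1 ≤ R + 1)]
  have hsqrtR : √α * (R + 1) ≤ 1 := by
    rw [← pow_le_one_iff_of_nonneg (by positivity) two_ne_zero, mul_pow, sq_sqrt hα.le]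
    exact hαR
  rw [chi2_eq_sum_mul_sq, KL_mixture_eq_sum (hP1.trans hQ1.symm) hAC, Finset.mul_sum,
    Finset.sum_mul]
  refine Finset.sum_le_sum fun z _ => ?_
  have hratio : 0 ≤ P z / Q z := div_nonneg (hP0 z) (hQ0 z)
  have hx₁ : -1 ≤ α * (P z / Q z - 1) := by nlinarith
  have hx₂ : α * (P z / Q z - 1) ≤ √α := calc
    α * (P z / Q z - 1) ≤ √α * √α * R := by
      rw [mul_self_sqrt hα.le]
      nlinarith [Finset.single_le_sum (fun i _ => div_nonneg (hP0 i) (hQ0 i)) (Finset.mem_univ z)]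
    _ ≤ √α := by nlinarith [sqrt_nonneg α]
  calc α ^ 2 / 2 * (Q z * (P z / Q z - 1) ^ 2) * (1 - √α)
      = Q z * ((1 - √α) * (α * (P z / Q z - 1)) ^ 2 / 2) := by ring
    _ ≤ _ := mul_le_mul_of_nonneg_left
      (one_sub_mul_sq_div_two_le_one_add_mul_log_sub _ (sqrt_nonneg α) hx₁ hx₂) (hQ0 z)
end

section
/- Let f, g : X₂ → ℝ be functions on a finite set X₂ with g ≥ 0, let P, Q be pmfs on T×X₂ where T = {1,2}, and let ε, δ : T → [0,1] with E_Q[δ_T² g(X₂)] > 0. Define ν > 0 by ν² = E_P[ε_T² g(X₂)] / E_Q[δ_T² g(X₂)]. For λ ∈ [0,1], define the pmf R on {1,2,3,4}×X₂ by R(t,x₂) = λ P(t,x₂) for t∈{1,2} and R(t,x₂) = (1-λ) Q(t-2,x₂) for t∈{3,4}, and define γ_t = ε_t for t∈{1,2}, γ_t = ν·δ_{t-2} for t∈{3,4}. Then λ · E_P[ε_T f(X₂)]/√(E_P[ε_T² g(X₂)]) + (1-λ) · E_Q[δ_T f(X₂)]/√(E_Q[δ_T² g(X₂)]) = E_R[γ_T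 f(X₂)]/√(E_R[γ_T² g(X₂)]). -/
open Filter Real

/-- the algebraic mixing identity behind convexity of the rate region. -/
theorem stmt4 {X2 : Type*} [Fintype X2]
    (f g : X2 → ℝ) (hg : ∀ x, 0 ≤ g x)
    (P Q : Fin 2 → X2 → ℝ) (ε δ : Fin 2 → ℝ)
    (hPnonneg : ∀ t x, 0 ≤ P t x) (hPsum : ∑ t, ∑ x, P t x = 1)
    (hQnonneg : ∀ t x, 0 ≤ Q t x) (hQsum : ∑ t, ∑ x, Q t x = 1)
    (hε : ∀ t, ε t ∈ Set.Icc (0:ℝ) 1) (hδ : ∀ t, δ t ∈ Set.Icc (0:ℝ) 1)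
    (hPpos : 0 < ∑ t, ∑ x, P t x * (ε t) ^ 2 * g x)
    (hQpos : 0 < ∑ t, ∑ x, Q t x * (δ t) ^ 2 * g x)
    (ν : ℝ) (hν : 0 < ν)
    (hν2 : ν ^ 2 = (∑ t, ∑ x, P t x * (ε t) ^ 2 * g x)
                    / (∑ t, ∑ x, Q t x * (δ t) ^ 2 * g x))
    (lam : ℝ) (hlam : lam ∈ Set.Icc (0:ℝ) 1)
    (R : Fin 4 → X2 → ℝ) (γ : Fin 4 → ℝ)
    (hR : ∀ x, R 0 x = lam * P 0 x ∧ R 1 x = lam * P 1 x ∧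
               R 2 x = (1 - lam) * Q 0 x ∧ R 3 x = (1 - lam) * Q 1 x)
    (hγ : γ 0 = ε 0 ∧ γ 1 = ε 1 ∧ γ 2 = ν * δ 0 ∧ γ 3 = ν * δ 1) :
    lam * (∑ t, ∑ x, P t x * ε t * f x)
        / Real.sqrt (∑ t, ∑ x, P t x * (ε t) ^ 2 * g x)
      + (1 - lam) * (∑ t, ∑ x, Q t x * δ t * f x)
        / Real.sqrt (∑ t, ∑ x, Q t x * (δ t) ^ 2 * g x)
    = (∑ t, ∑ x, R t x * γ t * f x)
        / Real.sqrt (∑ t, ∑ x, R t x * (γ t) ^ 2 * g x) := by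
  obtain ⟨hg0, hg1, hg2, hg3⟩ := hγ
  set A := ∑ t, ∑ x, P t x * ε t * f x with hA
  set B := ∑ t, ∑ x, P t x * (ε t) ^ 2 * g x with hB
  set C := ∑ t, ∑ x, Q t x * δ t * f x with hC
  set D := ∑ t, ∑ x, Q t x * (δ t) ^ 2 * g x with hD
  have hsB : (0:ℝ) < Real.sqrt B := Real.sqrt_pos.mpr hPpos
  have hsD : (0:ℝ) < Real.sqrt D := Real.sqrt_pos.mpr hQpos
  have hνeq : ν = Real.sqrt B / Real.sqrt D := by
    have h1 : ν = Real.sqrt (ν ^ 2) := (Real.sqrt_sq hν.le).symm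
    rw [h1, hν2, Real.sqrt_div' B hQpos.le]
  have e0 : ∀ (h : X2 → ℝ) c, (∑ x, R 0 x * c * h x) = lam * ∑ x, P 0 x * c * h x := fun h c => by
    rw [Finset.mul_sum]; exact Finset.sum_congr rfl fun x _ => by rw [(hR x).1]; ring
  have e1 : ∀ (h : X2 → ℝ) c, (∑ x, R 1 x * c * h x) = lam * ∑ x, P 1 x * c * h x := fun h c => by
    rw [Finset.mul_sum]; exact Finset.sum_congr rfl fun x _ => by rw [(hR x).2.1]; ring
  have e2 : ∀ (h : X2 → ℝ) c, (∑ x, R 2 x * c * h x) = (1 - lam) * ∑ x, Q 0 x * c * h x := fun h c => by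
    rw [Finset.mul_sum]; exact Finset.sum_congr rfl fun x _ => by rw [(hR x).2.2.1]; ring
  have e3 : ∀ (h : X2 → ℝ) c, (∑ x, R 3 x * c * h x) = (1 - lam) * ∑ x, Q 1 x * c * h x := fun h c => by
    rw [Finset.mul_sum]; exact Finset.sum_congr rfl fun x _ => by rw [(hR x).2.2.2]; ring
  have hnum : (∑ t, ∑ x, R t x * γ t * f x) = lam * A + (1 - lam) * ν * C := by
    have c0 : ∀ x, Q 0 x * (ν * δ 0) * f x = ν * (Q 0 x * δ 0 * f x) := fun x => by ring
    have c1 : ∀ x, Q 1 x * (ν * δ 1) * f x = ν * (Q 1 x * δ 1 * f x) := fun x => by ring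
    rw [Fin.sum_univ_four, hg0, hg1, hg2, hg3, e0, e1, e2, e3, hA, hC, Fin.sum_univ_two,
      Fin.sum_univ_two, Finset.sum_congr rfl (fun x _ => c0 x),
      Finset.sum_congr rfl (fun x _ => c1 x), ← Finset.mul_sum, ← Finset.mul_sum]
    ring
  have hden : (∑ t, ∑ x, R t x * (γ t) ^ 2 * g x) = lam * B + (1 - lam) * ν ^ 2 * D := by
    have c0 : ∀ x, Q 0 x * (ν * δ 0) ^ 2 * g x = ν ^ 2 * (Q 0 x * (δ 0) ^ 2 * g x) := fun x => by ring
    have c1 : ∀ x, Q 1 x * (ν * δ 1) ^ 2 * g x = ν ^ 2 * (Q 1 x * (δ 1) ^ 2 * g x) := fun x => by ring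
    rw [Fin.sum_univ_four, hg0, hg1, hg2, hg3, e0, e1, e2, e3, hB, hD, Fin.sum_univ_two,
      Fin.sum_univ_two, Finset.sum_congr rfl (fun x _ => c0 x),
      Finset.sum_congr rfl (fun x _ => c1 x), ← Finset.mul_sum, ← Finset.mul_sum]
    ring
  have hν2D : ν ^ 2 * D = B := by
    rw [hν2]; field_simp
  have hdenB : (∑ t, ∑ x, R t x * (γ t) ^ 2 * g x) = B := by
    rw [hden]; linear_combination (1 - lam) * hν2D
  rw [hnum, hdenB, hνeq]
  field_simp
end
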